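/- Let H be a Hopf k-algebra and A a quasi partial H-comodule algebra. If M is a quasi partial (A,H)-relative Hopf module, then: (i) π_M(ma ⊗ h) = 0 whenever m ⊗ h ∈ ker π_M and a ∈ A; (ii) π_M(ma ⊗ h) = 0 whenever m ∈ M and a ⊗ h ∈ ker π_A. Consequently the canonical isomorphism M ⊗_A (A ⊗ H) ≅ M ⊗ H induces a surjective linear map M ⊗_A (A•H) → M•H. -/
import Mathlib


open TensorProduct

universe u

section Defs

variable (k : Type u) [Field k]

/-- The map `X ⊗ ε : X ⊗ H → X` (composed with `X ⊗ k ≅ X`). -/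
noncomputable def epsMap (X H : Type u) [AddCommGroup H] [Module k H] [Coalgebra k H]
    [AddCommGroup X] [Module k X] : X ⊗[k] H →ₗ[k] X :=
  (TensorProduct.rid k X).toLinearMap ∘ₗ
    LinearMap.lTensor X (Coalgebra.counit : H →ₗ[k] k)

/-- The map `X ⊗ Δ` followed by reassociation, `X ⊗ H → (X ⊗ H) ⊗ H`. -/
noncomputable def deltaMap (X H : Type u) [AddCommGroup H] [Module k H] [Coalgebra k H]
    [AddCommGroup X] [Module k X] : X ⊗[k] H →ₗ[k] (X ⊗[k] H) ⊗[k] H :=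
  (TensorProduct.assoc k X H H).symm.toLinearMap ∘ₗ
    LinearMap.lTensor X (Coalgebra.comul : H →ₗ[k] H ⊗[k] H)

/-- `(X, X•H, π, ρ)` is a quasi partial `H`-comodule: `π` is surjective, [QPC1]
counitality holds (via the induced map `X•ε`), and [QPC2] coassociativity holds in
the coassociativity pushout `Θ = ((X•H) ⊗ H)/(K + L)`. -/
noncomputable def IsQuasiPartialComodule {X XbH H : Type u}
    [AddCommGroup H] [Module k H] [Coalgebra k H]
    [AddCommGroup X] [Module k X] [AddCommGroup XbH] [Module k XbH]
    (π : X ⊗[k] H →ₗ[k] XbH) (ρ : X →ₗ[k] XbH) : Prop :=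
  Function.Surjective π ∧
  (∃ c : XbH →ₗ[k] X, c ∘ₗ π = epsMap k X H ∧ c ∘ₗ ρ = LinearMap.id) ∧
  (∀ (x : X) (u : X ⊗[k] H), π u = ρ x →
    TensorProduct.map ρ (LinearMap.id : H →ₗ[k] H) u -
      TensorProduct.map π (LinearMap.id : H →ₗ[k] H) (deltaMap k X H u) ∈
    Submodule.map (TensorProduct.map ρ (LinearMap.id : H →ₗ[k] H)) (LinearMap.ker π) ⊔
    Submodule.map (TensorProduct.map π (LinearMap.id : H →ₗ[k] H) ∘ₗ deltaMap k X H)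
      (LinearMap.ker π))

variable {H A M : Type u} [Ring H] [HopfAlgebra k H]
  [AddCommGroup M] [Module k M] [Ring A] [Algebra k A]

/-- The right `A`-action on `M` as a map `M ⊗ A → M`. -/
noncomputable def actLin (actM : M →ₗ[k] A →ₗ[k] M) : M ⊗[k] A →ₗ[k] M :=
  TensorProduct.lift actM

/-- The `A ⊗ H`-action on `M ⊗ H`: `(m ⊗ h)·(a ⊗ h') = ma ⊗ hh'`. -/
noncomputable def muMH (actM : M →ₗ[k] A →ₗ[k] M) :
    (M ⊗[k] H) ⊗[k] (A ⊗[k] H) →ₗ[k] M ⊗[k] H :=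
  TensorProduct.map (actLin k actM) (LinearMap.mul' k H) ∘ₗ
    (TensorProduct.tensorTensorTensorComm k M H A H).toLinearMap

/-- The map `M ⊗ (A ⊗ H) → M ⊗ H`, `m ⊗ (a ⊗ h) ↦ ma ⊗ h`. -/
noncomputable def act2 (actM : M →ₗ[k] A →ₗ[k] M) :
    M ⊗[k] (A ⊗[k] H) →ₗ[k] M ⊗[k] H :=
  TensorProduct.map (actLin k actM) (LinearMap.id : H →ₗ[k] H) ∘ₗ
    (TensorProduct.assoc k M A H).symm.toLinearMap

end Defs

/-- Lemma on kernels for quasi partial relative Hopf modules: (i) `π_M(ma ⊗ h) = 0`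
for `m ⊗ h ∈ ker π_M` and `a ∈ A`; (ii) `π_M(ma ⊗ h) = 0` for `m ∈ M` and
`a ⊗ h ∈ ker π_A`. Consequently, the isomorphism `M ⊗_A (A ⊗ H) ≅ M ⊗ H` induces a
surjective map `M ⊗_A (A•H) → M•H` (the domain being presented as the quotient of
`M ⊗ H` by `W = act2(M ⊗ ker π_A)`). -/
theorem kerpi_lemma {k H A AbH M MbH : Type u} [Field k] [Ring H] [HopfAlgebra k H]
    [Ring A] [Algebra k A] [AddCommGroup AbH] [Module k AbH]
    [AddCommGroup M] [Module k M] [AddCommGroup MbH] [Module k MbH]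
    (πA : A ⊗[k] H →ₗ[k] AbH) (ρA : A →ₗ[k] AbH)
    (hA : IsQuasiPartialComodule k πA ρA)
    -- `A` is a quasi partial `H`-comodule algebra:
    (mulAbH : AbH →ₗ[k] AbH →ₗ[k] AbH)
    (hmul : ∀ (a a' : A) (h h' : H),
      mulAbH (πA (a ⊗ₜ h)) (πA (a' ⊗ₜ h')) = πA ((a * a') ⊗ₜ (h * h')))
    (hone : ρA 1 = πA (1 ⊗ₜ 1))
    (hρmul : ∀ a a' : A, ρA (a * a') = mulAbH (ρA a) (ρA a'))
    -- `M` is a quasi partial `(A,H)`-relative Hopf module: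
    (πM : M ⊗[k] H →ₗ[k] MbH) (ρM : M →ₗ[k] MbH)
    (hM : IsQuasiPartialComodule k πM ρM)
    (actM : M →ₗ[k] A →ₗ[k] M)
    (act_one : ∀ m : M, actM m 1 = m)
    (act_mul : ∀ (m : M) (a b : A), actM (actM m a) b = actM m (a * b))
    -- [PRHM1]
    (prhm1 : ∀ w : (M ⊗[k] H) ⊗[k] (A ⊗[k] H),
      TensorProduct.map πM πA w = 0 → πM (muMH k actM w) = 0)
    -- [PRHM2]
    (smulMH : MbH →ₗ[k] AbH →ₗ[k] MbH)
    (hsmul : ∀ (m : M) (h : H) (a : A) (h' : H),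
      smulMH (πM (m ⊗ₜ h)) (πA (a ⊗ₜ h')) = πM (actM m a ⊗ₜ (h * h')))
    (prhm2 : ∀ (m : M) (a : A), ρM (actM m a) = smulMH (ρM m) (ρA a)) :
    (∀ u ∈ LinearMap.ker πM, ∀ a : A,
        πM (LinearMap.rTensor H (actM.flip a) u) = 0) ∧
    (∀ (m : M), ∀ v ∈ LinearMap.ker πA, πM (act2 k actM (m ⊗ₜ v)) = 0) ∧
    (∃ φ : ((M ⊗[k] H) ⧸ Submodule.map (act2 k actM)
        (LinearMap.range (LinearMap.lTensor M (LinearMap.ker πA).subtype))) →ₗ[k] MbH,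
      φ ∘ₗ (Submodule.map (act2 k actM)
        (LinearMap.range (LinearMap.lTensor M (LinearMap.ker πA).subtype))).mkQ = πM ∧
      Function.Surjective φ) := by
  have hmu : ∀ (m : M) (h : H) (a : A) (h' : H),
      muMH k actM ((m ⊗ₜ h) ⊗ₜ (a ⊗ₜ h')) = actM m a ⊗ₜ (h * h') := by
    intro m h a h'
    simp [muMH, actLin, TensorProduct.tensorTensorTensorComm, TensorProduct.tensorTensorTensorAssoc]
  have part1 : ∀ u ∈ LinearMap.ker πM, ∀ a : A,
      πM (LinearMap.rTensor H (actM.flip a) u) = 0 := by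
    intro u hu a
    have key : LinearMap.rTensor H (actM.flip a) u = muMH k actM (u ⊗ₜ (a ⊗ₜ (1 : H))) := by
      have : (muMH k actM ∘ₗ (TensorProduct.mk k (M ⊗[k] H) (A ⊗[k] H)).flip (a ⊗ₜ (1 : H)))
          = LinearMap.rTensor H (actM.flip a) := by
        apply TensorProduct.ext'
        intro m h
        simp [hmu, TensorProduct.mk]
      rw [← this]; rfl
    rw [key]
    apply prhm1
    rw [TensorProduct.map_tmul, LinearMap.mem_ker.mp hu, TensorProduct.zero_tmul]
  have part2 : ∀ (m : M), ∀ v ∈ LinearMap.ker πA, πM (act2 k actM (m ⊗ₜ v)) = 0 := by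
    intro m v hv
    have key : ∀ v : A ⊗[k] H, act2 k actM (m ⊗ₜ v) = muMH k actM ((m ⊗ₜ (1 : H)) ⊗ₜ v) := by
      intro v
      induction v using TensorProduct.induction_on with
      | zero => simp
      | tmul a h => simp [hmu, act2, actLin]
      | add x y hx hy => simp [TensorProduct.tmul_add, hx, hy]
    rw [key]
    apply prhm1
    rw [TensorProduct.map_tmul, LinearMap.mem_ker.mp hv, TensorProduct.tmul_zero]
  refine ⟨part1, part2, ?_⟩
  set W := Submodule.map (act2 k actM)
      (LinearMap.range (LinearMap.lTensor M (LinearMap.ker πA).subtype)) with hW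
  have hWker : W ≤ LinearMap.ker πM := by
    rintro x ⟨y, ⟨z, rfl⟩, rfl⟩
    simp only [LinearMap.mem_ker]
    induction z using TensorProduct.induction_on with
    | zero => simp
    | tmul m v => simpa using part2 m v.1 v.2
    | add x y hx hy => simp [hx, hy]
  refine ⟨Submodule.liftQ W πM hWker, Submodule.liftQ_mkQ W πM hWker, ?_⟩
  intro b
  obtain ⟨u, hu⟩ := hM.1 b
  exact ⟨W.mkQ u, by simpa using hu⟩
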